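/- arXiv:2005.10491 — 5 statements merged into one kernel-verified Lean document; each statement's English description precedes it below -/
import Mathlib

section
/- For every odd integer t ≥ 3, the distance graph G(ℤ,{2,t}) admits a proper 3-coloring. -/
def distG (t : ℤ) : SimpleGraph ℤ :=
  SimpleGraph.fromRel (fun i j => |i - j| = 2 ∨ |i - j| = t)

/-- color of position k (0 ≤ k < t) in the t-cycle: 0,1,0,1,...,0,2 -/
def acol (t k : ℤ) : ℤ := if k = t - 1 then 2 else k % 2

/-- the coloring of ℤ -/
def col (t n : ℤ) : ℤ :=
  if n % 2 = 0 then acol t ((n / 2) % t)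
  else acol t (((n - t) / 2 + 1) % t)

lemma acol_adj (t : ℤ) (ht : t % 2 = 1) (h3 : 3 ≤ t) (k : ℤ)
    (hk0 : 0 ≤ k) (hk1 : k < t) : acol t k ≠ acol t ((k + 1) % t) := by
  unfold acol
  by_cases h : k = t - 1
  · subst h
    have h0 : (t - 1 + 1) % t = 0 := by
      have : t - 1 + 1 = t := by ring
      rw [this, Int.emod_self]
    rw [h0]
    have h1 : ¬ ((0:ℤ) = t - 1) := by omega
    rw [if_pos rfl, if_neg h1]
    omega
  · have hlt : k + 1 < t := by omega
    have he : (k + 1) % t = k + 1 := Int.emod_eq_of_lt (by omega) hlt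
    rw [he, if_neg h]
    by_cases h2 : k + 1 = t - 1
    · rw [if_pos h2]
      omega
    · rw [if_neg h2]
      omega

lemma col_mem (t n : ℤ) : 0 ≤ col t n ∧ col t n < 3 := by
  unfold col acol
  split <;> split <;> omega

lemma col_step2 (t : ℤ) (ht : t % 2 = 1) (h3 : 3 ≤ t) (n : ℤ) :
    col t n ≠ col t (n + 2) := by
  have htpos : (0:ℤ) < t := by omega
  unfold col
  by_cases hpar : n % 2 = 0
  · have hpar2 : (n + 2) % 2 = 0 := by omega
    rw [if_pos hpar, if_pos hpar2]
    have hd : (n + 2) / 2 = n / 2 + 1 := by omega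
    rw [hd]
    have key : (n / 2 + 1) % t = ((n / 2) % t + 1) % t := by
      conv_lhs => rw [Int.add_emod]
      conv_rhs => rw [Int.add_emod, Int.emod_emod_of_dvd _ dvd_rfl]
    rw [key]
    exact acol_adj t ht h3 _ (Int.emod_nonneg _ (by omega)) (Int.emod_lt_of_pos _ htpos)
  · have hpar2 : ¬ ((n + 2) % 2 = 0) := by omega
    rw [if_neg hpar, if_neg hpar2]
    have hd : (n + 2 - t) / 2 = (n - t) / 2 + 1 := by omega
    rw [hd]
    set a := (n - t) / 2 + 1 with ha
    have hd2 : (n - t) / 2 + 1 + 1 = a + 1 := by rw [ha]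
    rw [hd2]
    have key : (a + 1) % t = (a % t + 1) % t := by
      conv_lhs => rw [Int.add_emod]
      conv_rhs => rw [Int.add_emod, Int.emod_emod_of_dvd _ dvd_rfl]
    rw [key]
    exact acol_adj t ht h3 _ (Int.emod_nonneg _ (by omega)) (Int.emod_lt_of_pos _ htpos)

lemma col_stept (t : ℤ) (ht : t % 2 = 1) (h3 : 3 ≤ t) (n : ℤ) :
    col t n ≠ col t (n + t) := by
  have htpos : (0:ℤ) < t := by omega
  unfold col
  by_cases hpar : n % 2 = 0
  · have hpar2 : ¬ ((n + t) % 2 = 0) := by omega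
    rw [if_pos hpar, if_neg hpar2]
    have hd : (n + t - t) / 2 = n / 2 := by omega
    rw [hd]
    have key : (n / 2 + 1) % t = ((n / 2) % t + 1) % t := by
      conv_lhs => rw [Int.add_emod]
      conv_rhs => rw [Int.add_emod, Int.emod_emod_of_dvd _ dvd_rfl]
    rw [key]
    exact acol_adj t ht h3 _ (Int.emod_nonneg _ (by omega)) (Int.emod_lt_of_pos _ htpos)
  · have hpar2 : (n + t) % 2 = 0 := by omega
    rw [if_neg hpar, if_pos hpar2]
    have hd : (n + t) / 2 = (n - t) / 2 + t := by omega
    rw [hd]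
    have hmt : ((n - t) / 2 + t) % t = ((n - t) / 2) % t := by
      rw [Int.add_emod, Int.emod_self, add_zero, Int.emod_emod_of_dvd _ dvd_rfl]
    rw [hmt]
    have key : ((n - t) / 2 + 1) % t = (((n - t) / 2) % t + 1) % t := by
      conv_lhs => rw [Int.add_emod]
      conv_rhs => rw [Int.add_emod, Int.emod_emod_of_dvd _ dvd_rfl]
    rw [key]
    exact (acol_adj t ht h3 _ (Int.emod_nonneg _ (by omega)) (Int.emod_lt_of_pos _ htpos)).symm

lemma col_ne_of_adj (t : ℤ) (ht : t % 2 = 1) (h3 : 3 ≤ t) {i j : ℤ}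
    (h : (distG t).Adj i j) : col t i ≠ col t j := by
  rw [distG, SimpleGraph.fromRel_adj] at h
  obtain ⟨hne, hrel⟩ := h
  have habs : |i - j| = 2 ∨ |i - j| = t := by
    rcases hrel with h | h
    · exact h
    · rwa [abs_sub_comm] at h
  rcases habs with h | h
  · rcases (abs_eq (by norm_num : (0:ℤ) ≤ 2)).mp h with h | h
    · have : i = j + 2 := by omega
      rw [this]
      exact (col_step2 t ht h3 j).symm
    · have : j = i + 2 := by omega
      rw [this]
      exact col_step2 t ht h3 i
  · rcases (abs_eq (by omega : (0:ℤ) ≤ t)).mp h with h | h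
    · have : i = j + t := by omega
      rw [this]
      exact (col_stept t ht h3 j).symm
    · have : j = i + t := by omega
      rw [this]
      exact col_stept t ht h3 i

theorem stmt2 (t : ℤ) (ht : Odd t) (h3 : 3 ≤ t) :
    (distG t).Colorable 3 := by
  have ht2 : t % 2 = 1 := Int.odd_iff.mp ht
  exact ⟨SimpleGraph.Coloring.mk
    (fun n => ⟨(col t n).toNat, by have := col_mem t n; omega⟩)
    (fun {v w} h => by
      have hne := col_ne_of_adj t ht2 h3 h
      have h1 := col_mem t v
      have h2 := col_mem t w
      intro hEq
      apply hne
      have hv : (col t v).toNat = (col t w).toNat := congrArg Fin.val hEq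
      omega)⟩
end

section
/- If S = (1,2,2,2,2,2,…), then the S-packing chromatic number of G(ℤ,{2,3}) equals 6. -/
open Finset SimpleGraph

lemma distG_three_adj_iff {u v : ℤ} : (distG 3).Adj u v ↔ |u - v| = 2 ∨ |u - v| = 3 := by
  simp only [distG, fromRel_adj, abs_sub_comm v u, or_self, and_iff_right_iff_imp]
  rintro h rfl
  simp at h

lemma distG_three_adj_add (u : ℤ) {d : ℤ} (hd : |d| = 2 ∨ |d| = 3) : (distG 3).Adj u (u + d) := by
  rwa [distG_three_adj_iff, sub_add_cancel_left, abs_neg]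

lemma distG_three_connected : (distG 3).Connected := by
  have reachable_succ (i : ℤ) : (distG 3).Reachable i (i + 1) := by
    have h₁ := distG_three_adj_add i (d := 3) (by norm_num)
    have h₂ := distG_three_adj_add (i + 3) (d := -2) (by norm_num)
    rw [show i + 3 + -2 = i + 1 by ring] at h₂
    exact h₁.reachable.trans h₂.reachable
  refine (connected_iff_exists_forall_reachable _).2 ⟨0, fun n => ?_⟩
  induction n using Int.induction_on with
  | zero => rfl
  | succ i ih => exact ih.trans (reachable_succ i)
  | pred i ih => exact ih.trans (by simpa using (reachable_succ (-i - 1)).symm)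

lemma SimpleGraph.Walk.abs_sub_le_mul_length {G : SimpleGraph ℤ} {c : ℤ}
    (hG : ∀ u v, G.Adj u v → |u - v| ≤ c) {u v : ℤ} (p : G.Walk u v) :
    |u - v| ≤ c * p.length := by
  induction p with
  | nil => simp
  | @cons a b _ h p ih =>
    calc |a - _| ≤ |a - b| + |b - _| := abs_sub_le _ _ _
      _ ≤ c * (p.cons h).length := by
        rw [length_cons]; push_cast; linarith [hG a b h]

lemma distG_three_dist_add_le_one (u : ℤ) {a : ℤ} (ha : a ∈ ({0, 2, 3, -2, -3} : Finset ℤ)) :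
    (distG 3).dist u (u + a) ≤ 1 := by
  rcases eq_or_ne a 0 with rfl | ha₀
  · simp
  · have hadj : (distG 3).Adj u (u + a) := distG_three_adj_add u <| by
      simp only [mem_insert, mem_singleton] at ha
      rcases ha with rfl | rfl | rfl | rfl | rfl <;> simp_all
    exact (dist_eq_one_iff_adj.2 hadj).le

lemma distG_three_dist_add_le_two (u : ℤ) {d : ℤ} (hd : |d| ≤ 6) :
    (distG 3).dist u (u + d) ≤ 2 := by
  obtain ⟨a, ha, b, hb, rfl⟩ : ∃ a ∈ ({0, 2, 3, -2, -3} : Finset ℤ),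
      ∃ b ∈ ({0, 2, 3, -2, -3} : Finset ℤ), d = a + b := by
    have two_steps : ∀ d ∈ Icc (-6 : ℤ) 6, ∃ a ∈ ({0, 2, 3, -2, -3} : Finset ℤ),
        ∃ b ∈ ({0, 2, 3, -2, -3} : Finset ℤ), d = a + b := by decide
    exact two_steps d (mem_Icc.2 (abs_le.1 hd))
  calc (distG 3).dist u (u + (a + b))
      ≤ (distG 3).dist u (u + a) + (distG 3).dist (u + a) (u + a + b) := by
        rw [← add_assoc]; exact distG_three_connected.dist_triangle
    _ ≤ 1 + 1 := add_le_add (distG_three_dist_add_le_one u ha) (distG_three_dist_add_le_one _ hb)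

lemma distG_three_two_lt_dist_iff {u v : ℤ} : 2 < (distG 3).dist u v ↔ 6 < |u - v| := by
  constructor
  · intro h
    by_contra! hle
    have := distG_three_dist_add_le_two u (d := v - u) (by rwa [abs_sub_comm])
    rw [add_sub_cancel] at this
    omega
  · intro h
    by_contra! hle
    obtain ⟨p, hp⟩ := distG_three_connected.exists_walk_length_eq_dist u v
    have := p.abs_sub_le_mul_length (c := 3) fun a b hab => by
      rcases distG_three_adj_iff.1 hab with h | h <;> omega
    rw [hp] at this
    omega

section Counting

variable {p : ℤ → Prop} [DecidablePred p]

lemma card_filter_Ico_le_mul {L m : ℕ} (hblock : ∀ b, #{x ∈ Ico b (b + L) | p x} ≤ m)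
    (a : ℤ) (n : ℕ) : #{x ∈ Ico a (a + n * L) | p x} ≤ n * m := by
  induction n with
  | zero => simp
  | succ n ih =>
    have hsplit :
        Ico a (a + (n + 1 : ℕ) * L) = Ico a (a + n * L) ∪ Ico (a + n * L) (a + n * L + L) := by
      rw [Ico_union_Ico_eq_Ico (le_add_of_nonneg_right (by positivity)) (by omega)]
      push_cast; ring_nf
    calc #{x ∈ Ico a (a + (n + 1 : ℕ) * L) | p x}
        ≤ #{x ∈ Ico a (a + n * L) | p x} + #{x ∈ Ico (a + n * L) (a + n * L + L) | p x} := by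
          rw [hsplit, filter_union]; exact card_union_le _ _
      _ ≤ (n + 1) * m := by rw [add_mul, one_mul]; exact add_le_add ih (hblock _)

lemma card_filter_Ico_le_one {L : ℕ} (hp : ∀ u v, p u → p v → u ≠ v → L ≤ |u - v|) (b : ℤ) :
    #{x ∈ Ico b (b + L) | p x} ≤ 1 := by
  refine card_le_one.2 fun u hu v hv => ?_
  simp only [mem_filter, mem_Ico] at hu hv
  by_contra huv
  have := hp u v hu.2 hv.2 huv
  rw [le_abs] at this
  omega

lemma card_filter_Ico_five_le_two (hp : ∀ u v, p u → p v → u - v ≠ 2 ∧ u - v ≠ 3) (b : ℤ) :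
    #{x ∈ Ico b (b + 5) | p x} ≤ 2 := by
  by_contra! h
  obtain ⟨x, hx, y, hy, z, hz, hxy, hxz, hyz⟩ := two_lt_card.1 h
  simp only [mem_filter, mem_Ico] at hx hy hz
  have := hp x y hx.2 hy.2; have := hp y x hy.2 hx.2; have := hp x z hx.2 hz.2
  have := hp z x hz.2 hx.2; have := hp y z hy.2 hz.2; have := hp z y hz.2 hy.2
  omega

end Counting

/-- Color `0` is the paper's color `1`, whose class only has to be independent. -/
def IsPackingColoring {k : ℕ} (f : ℤ → Fin k) : Prop :=
  ∀ u v : ℤ, u ≠ v → f u = f v →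
    ((f u : ℕ) = 0 → ¬(|u - v| = 2 ∨ |u - v| = 3)) ∧ (1 ≤ (f u : ℕ) → 6 < |u - v|)

lemma isPackingColoring_iff_distG {k : ℕ} (f : ℤ → Fin k) :
    IsPackingColoring f ↔ ∀ u v : ℤ, u ≠ v → f u = f v →
      ((f u : ℕ) = 0 → ¬ (distG 3).Adj u v) ∧ (1 ≤ (f u : ℕ) → 2 < (distG 3).dist u v) := by
  simp only [distG_three_adj_iff, distG_three_two_lt_dist_iff, IsPackingColoring]

namespace IsPackingColoring

variable {k : ℕ} {f : ℤ → Fin k}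

lemma card_fiber_le_fourteen (hf : IsPackingColoring f) {c : Fin k} (hc : (c : ℕ) = 0) :
    #{x ∈ Ico (0 : ℤ) 35 | f x = c} ≤ 14 := by
  refine card_filter_Ico_le_mul (L := 5) (card_filter_Ico_five_le_two fun u v hu hv => ?_) 0 7
  rcases eq_or_ne u v with rfl | huv
  · omega
  have := (hf u v huv (hu.trans hv.symm)).1 (hu ▸ hc)
  rw [abs_eq zero_le_two, abs_eq zero_le_three] at this
  omega

lemma card_fiber_le_five (hf : IsPackingColoring f) {c : Fin k} (hc : (c : ℕ) ≠ 0) :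
    #{x ∈ Ico (0 : ℤ) 35 | f x = c} ≤ 5 := by
  refine card_filter_Ico_le_mul (L := 7) (card_filter_Ico_le_one fun u v hu hv huv => ?_) 0 5
  have := (hf u v huv (hu.trans hv.symm)).2 (hu ▸ Nat.one_le_iff_ne_zero.2 hc)
  rw [lt_abs] at this
  rw [le_abs]
  omega

theorem six_le (hf : IsPackingColoring f) : 6 ≤ k := by
  by_contra! hk
  have hcount : 35 = ∑ c : Fin k, #{x ∈ Ico (0 : ℤ) 35 | f x = c} := by
    simpa using card_eq_sum_card_fiberwise (f := f) (s := Ico (0 : ℤ) 35) (t := univ) (by simp)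
  have hfiber (c : Fin k) :
      #{x ∈ Ico (0 : ℤ) 35 | f x = c} ≤ if (c : ℕ) = 0 then 14 else 5 := by
    split_ifs with hc
    exacts [hf.card_fiber_le_fourteen hc, hf.card_fiber_le_five hc]
  have hbound : ∑ c : Fin k, (if (c : ℕ) = 0 then 14 else 5) ≤ 34 :=
    calc ∑ c : Fin k, (if (c : ℕ) = 0 then 14 else 5)
        = ∑ i ∈ range k, if i = 0 then 14 else 5 :=
          Fin.sum_univ_eq_sum_range (fun i => if i = 0 then 14 else 5) k
      _ ≤ ∑ i ∈ range 5, if i = 0 then 14 else 5 :=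
          sum_le_sum_of_subset (range_subset_range.2 (by omega))
      _ = 34 := by decide
  have := sum_le_sum fun c (_ : c ∈ univ) => hfiber c
  omega

end IsPackingColoring

/-- The paper's pattern `1123411562113451162311456`, with every color lowered by one. -/
def pattern : ZMod 25 → Fin 6 :=
  ![0, 0, 1, 2, 3, 0, 0, 4, 5, 1, 0, 0, 2, 3, 4, 0, 0, 5, 1, 2, 0, 0, 3, 4, 5]

lemma pattern_spec : ∀ x d : ZMod 25, pattern (x + d) = pattern x →
    ((pattern x : ℕ) = 0 → d.val ≠ 2 ∧ d.val ≠ 3 ∧ d.val ≠ 22 ∧ d.val ≠ 23) ∧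
    (1 ≤ (pattern x : ℕ) → d.val = 0 ∨ 7 ≤ d.val ∧ d.val ≤ 18) := by
  decide

lemma isPackingColoring_pattern : IsPackingColoring fun z : ℤ => pattern z := by
  intro u v huv he
  have hval : (((v - u : ℤ) : ZMod 25).val : ℤ) = (v - u) % 25 := ZMod.val_intCast _
  obtain ⟨h0, h1⟩ := pattern_spec u (v - u : ℤ) (by push_cast; simpa using he.symm)
  refine ⟨fun hu => ?_, fun hu => ?_⟩
  · rw [abs_eq zero_le_two, abs_eq zero_le_three]
    have := h0 hu
    omega
  · rw [lt_abs]
    have := h1 hu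
    omega

theorem stmt6 :
    IsLeast {k : ℕ | ∃ f : ℤ → Fin k, ∀ u v : ℤ, u ≠ v → f u = f v →
      ((f u : ℕ) = 0 → ¬ (distG 3).Adj u v) ∧ (1 ≤ (f u : ℕ) → 2 < (distG 3).dist u v)} 6 := by
  refine ⟨⟨_, (isPackingColoring_iff_distG _).1 isPackingColoring_pattern⟩, ?_⟩
  rintro k ⟨f, hf⟩
  exact ((isPackingColoring_iff_distG f).2 hf).six_le
end

section
/- For odd t = 4k−1 with 3 ∤ t, the periodic coloring of ℤ with pattern 123145 (period 6) is a (1,2,2,2,2)-packing coloring of G(ℤ,{2,t}). -/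
namespace SimpleGraph

variable {V : Type*} {G : SimpleGraph V} {u v : V}

lemma Reachable.two_lt_dist (hr : G.Reachable u v) (hne : u ≠ v) (hadj : ¬ G.Adj u v)
    (hpath : ∀ w, G.Adj u w → ¬ G.Adj w v) : 2 < G.dist u v := by
  have hedist : 2 < G.edist u v := by
    refine two_lt_edist_iff.mpr ⟨hne, hadj, Set.eq_empty_of_forall_notMem fun w hw => ?_⟩
    rw [mem_commonNeighbors] at hw
    exact hpath w hw.1 hw.2.symm
  rw [← hr.coe_dist_eq_edist] at hedist
  exact_mod_cast hedist

end SimpleGraph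

section distG

variable {t u v : ℤ}

lemma distG_adj_iff : (distG t).Adj u v ↔ u ≠ v ∧ (|u - v| = 2 ∨ |u - v| = t) := by
  simp only [distG, SimpleGraph.fromRel_adj, abs_sub_comm v u]
  tauto

lemma sub_eq_of_distG_adj (h : (distG t).Adj u v) :
    u - v = 2 ∨ u - v = -2 ∨ u - v = t ∨ u - v = -t := by
  rcases (distG_adj_iff.mp h).2 with h | h <;> rcases abs_choice (u - v) with h' | h' <;> omega

lemma distG_adj_add_two (t u : ℤ) : (distG t).Adj u (u + 2) :=
  distG_adj_iff.mpr ⟨by omega, Or.inl (by norm_num)⟩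

lemma distG_reachable_add_two_mul (t u n : ℤ) : (distG t).Reachable u (u + 2 * n) := by
  refine Int.induction_on n (by simp) (fun n ih => ?_) (fun n ih => ?_)
  · have hstep := (distG_adj_add_two t (u + 2 * n)).reachable
    rw [add_assoc, ← mul_add_one] at hstep
    exact ih.trans hstep
  · have hstep := (distG_adj_add_two t (u + 2 * (-n - 1))).reachable
    rw [add_assoc, ← mul_add_one, sub_add_cancel] at hstep
    exact ih.trans hstep.symm

lemma distG_reachable_of_two_dvd_sub (h : 2 ∣ v - u) : (distG t).Reachable u v := by
  obtain ⟨n, hn⟩ := h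
  simpa [← hn] using distG_reachable_add_two_mul t u n

lemma not_distG_adj_of_three_dvd_sub (ht : ¬ 3 ∣ t) (h : 3 ∣ u - v) : ¬ (distG t).Adj u v :=
  fun hadj => by rcases sub_eq_of_distG_adj hadj with h' | h' | h' | h' <;> omega

lemma two_lt_distG_dist_of_six_dvd_sub (ht : Odd t) (ht3 : ¬ 3 ∣ t) (hne : u ≠ v)
    (h : 6 ∣ u - v) : 2 < (distG t).dist u v := by
  obtain ⟨m, rfl⟩ := ht
  refine (distG_reachable_of_two_dvd_sub (by omega)).two_lt_dist hne
    (not_distG_adj_of_three_dvd_sub ht3 (by omega)) fun w huw hwv => ?_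
  rcases sub_eq_of_distG_adj huw with h₁ | h₁ | h₁ | h₁ <;>
    rcases sub_eq_of_distG_adj hwv with h₂ | h₂ | h₂ | h₂ <;> omega

end distG

def pattern123145 (n : ℤ) : ℕ :=
  if n % 6 = 0 then 1 else if n % 6 = 1 then 2
    else if n % 6 = 2 then 3 else if n % 6 = 3 then 1 else if n % 6 = 4 then 4 else 5

lemma pattern123145_eq_one_iff {n : ℤ} : pattern123145 n = 1 ↔ 3 ∣ n := by
  unfold pattern123145
  split_ifs <;> omega

lemma six_dvd_sub_of_pattern123145_eq {u v : ℤ} (h : pattern123145 u = pattern123145 v)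
    (h1 : pattern123145 u ≠ 1) : 6 ∣ u - v := by
  unfold pattern123145 at h h1
  split_ifs at h h1 <;> omega

theorem stmt11_general (t k : ℤ) (hk : t = 4 * k - 1) (hnd : ¬ (3 ∣ t))
    (f : ℤ → ℕ)
    (hf : ∀ n : ℤ, f n = if n % 6 = 0 then 1 else if n % 6 = 1 then 2
      else if n % 6 = 2 then 3 else if n % 6 = 3 then 1 else if n % 6 = 4 then 4 else 5) :
    ∀ u v : ℤ, u ≠ v → f u = f v →
      (f u = 1 → ¬ (distG t).Adj u v) ∧ (f u ≠ 1 → 2 < (distG t).dist u v) := by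
  obtain rfl : f = pattern123145 := funext hf
  intro u v huv hfuv
  refine ⟨fun h1 => not_distG_adj_of_three_dvd_sub hnd ?_, fun h1 =>
    two_lt_distG_dist_of_six_dvd_sub ⟨2 * k - 1, by omega⟩ hnd huv
      (six_dvd_sub_of_pattern123145_eq hfuv h1)⟩
  have hu := pattern123145_eq_one_iff.mp h1
  have hv := pattern123145_eq_one_iff.mp (hfuv ▸ h1)
  omega

theorem stmt11 (t k : ℤ) (hk : t = 4 * k - 1) (hnd : ¬ (3 ∣ t)) (h3 : 3 ≤ t)
    (f : ℤ → ℕ)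
    (hf : ∀ n : ℤ, f n = if n % 6 = 0 then 1 else if n % 6 = 1 then 2
      else if n % 6 = 2 then 3 else if n % 6 = 3 then 1 else if n % 6 = 4 then 4 else 5) :
    ∀ u v : ℤ, u ≠ v → f u = f v →
      (f u = 1 → ¬ (distG t).Adj u v) ∧ (f u ≠ 1 → 2 < (distG t).dist u v) :=
  stmt11_general t k hk hnd f hf
end

section
/- If t ≥ 3 is odd and d ≥ (t+1)/2, then every 1 + t(d − (t−3)/2) consecutive integers are pairwise at graph distance at most d in G(ℤ,{2,t}); consequently the d-distance chromatic number of G(ℤ,{2,t}) is at least 1 + t(d − (t−3)/2). -/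
lemma distG_adj_t {t : ℤ} (h3 : 3 ≤ t) (x : ℤ) : (distG t).Adj x (x + t) := by
  rw [distG, SimpleGraph.fromRel_adj]
  refine ⟨by omega, Or.inl (Or.inr ?_)⟩
  rw [show x - (x + t) = -t by ring, abs_neg, abs_of_nonneg (by omega)]

lemma distG_adj_s {t : ℤ} (s : ℤ) (hs : s = 2 ∨ s = -2) (x : ℤ) :
    (distG t).Adj x (x + s) := by
  rw [distG, SimpleGraph.fromRel_adj]
  refine ⟨by omega, Or.inl (Or.inl ?_)⟩
  rw [show x - (x + s) = -s by ring, abs_neg]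
  rcases hs with h | h <;> subst h <;> decide

lemma distG_walk {t : ℤ} (h3 : 3 ≤ t) : ∀ (a b : ℕ) (s : ℤ), (s = 2 ∨ s = -2) →
    ∀ x y : ℤ, y = x + a * t + b * s → ∃ p : (distG t).Walk x y, p.length = a + b := by
  intro a
  induction a with
  | zero =>
    intro b
    induction b with
    | zero =>
      intro s hs x y h
      have : y = x := by push_cast at h; omega
      subst this
      exact ⟨SimpleGraph.Walk.nil, rfl⟩
    | succ b ih =>
      intro s hs x y h
      obtain ⟨p, hp⟩ := ih s hs (x + s) y (by rw [h]; push_cast; ring)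
      exact ⟨SimpleGraph.Walk.cons (distG_adj_s s hs x) p, by simp [hp]⟩
  | succ a ih =>
    intro b s hs x y h
    obtain ⟨p, hp⟩ := ih b s hs (x + t) y (by rw [h]; push_cast; ring)
    exact ⟨SimpleGraph.Walk.cons (distG_adj_t h3 x) p, by simp [hp]; omega⟩

lemma distG_dist_le {t : ℤ} (h3 : 3 ≤ t) (a b : ℕ) (s : ℤ) (hs : s = 2 ∨ s = -2)
    (x y : ℤ) (h : y = x + a * t + b * s) : ((distG t).dist x y : ℤ) ≤ a + b := by
  obtain ⟨p, hp⟩ := distG_walk h3 a b s hs x y h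
  have := SimpleGraph.dist_le p
  omega

lemma distG_key (t d : ℤ) (ht : Odd t) (h3 : 3 ≤ t) (hd : (t + 1) / 2 ≤ d)
    (x y : ℤ) (h0 : 0 ≤ y - x) (hn : y - x ≤ t * (d - (t - 3) / 2)) :
    ((distG t).dist x y : ℤ) ≤ d := by
  obtain ⟨m, hm⟩ := ht
  have hm1 : 1 ≤ m := by omega
  have hdm : m + 1 ≤ d := by omega
  set e : ℤ := d - (t - 3) / 2 with he
  have hee : e = d - (m - 1) := by omega
  set n : ℤ := y - x with hnd
  set q : ℤ := n / t with hq
  set r : ℤ := n % t with hr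
  have hqr : n = q * t + r := by
    rw [hq, hr]; linarith [Int.mul_ediv_add_emod n t]
  have hr0 : 0 ≤ r := Int.emod_nonneg n (by omega)
  have hrt : r < t := Int.emod_lt_of_pos n (by omega)
  have hq0 : 0 ≤ q := by
    rw [hq]; exact Int.ediv_nonneg h0 (by omega)
  have hqe : q ≤ e := by
    have h1 : q * t ≤ e * t := by nlinarith
    exact le_of_mul_le_mul_right h1 (by omega)
  have hqe1 : 1 ≤ r → q ≤ e - 1 := by
    intro h1
    have h2 : q * t < e * t := by nlinarith
    have := lt_of_mul_lt_mul_right h2 (by omega : (0:ℤ) ≤ t)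
    omega
  rcases Int.even_or_odd r with hpar | hpar
  · -- r even : a = q, b = r/2, s = 2
    obtain ⟨c, hc⟩ := hpar
    have hb : ((distG t).dist x y : ℤ) ≤ (q.toNat : ℤ) + (c.toNat : ℤ) := by
      apply distG_dist_le h3 q.toNat c.toNat 2 (Or.inl rfl)
      rw [Int.toNat_of_nonneg hq0, Int.toNat_of_nonneg (by omega)]
      omega
    rw [Int.toNat_of_nonneg hq0, Int.toNat_of_nonneg (by omega)] at hb
    rcases eq_or_lt_of_le hr0 with h1 | h1
    · omega
    · have := hqe1 (by omega)
      omega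
  · obtain ⟨c, hc⟩ := hpar
    have hq1 := hqe1 (by omega)
    rcases eq_or_lt_of_le (show 1 ≤ r by omega) with h1 | h1
    · -- r = 1
      rcases eq_or_lt_of_le hq0 with h2 | h2
      · -- q = 0 : a = 1, b = m, s = -2
        have hb : ((distG t).dist x y : ℤ) ≤ (1 : ℕ) + (m.toNat : ℤ) := by
          apply distG_dist_le h3 1 m.toNat (-2) (Or.inr rfl)
          rw [Int.toNat_of_nonneg (by omega)]
          have hqt : q * t = 0 := by rw [← h2]; ring
          push_cast
          omega
        rw [Int.toNat_of_nonneg (by omega)] at hb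
        push_cast at hb
        omega
      · -- q ≥ 1 : a = q - 1, b = m + 1, s = 2
        have hb : ((distG t).dist x y : ℤ) ≤ ((q - 1).toNat : ℤ) + ((m + 1).toNat : ℤ) := by
          apply distG_dist_le h3 (q - 1).toNat (m + 1).toNat 2 (Or.inl rfl)
          rw [Int.toNat_of_nonneg (by omega), Int.toNat_of_nonneg (by omega)]
          nlinarith
        rw [Int.toNat_of_nonneg (by omega), Int.toNat_of_nonneg (by omega)] at hb
        omega
    · -- r odd, r ≥ 3 : a = q + 1, b = (t - r)/2, s = -2
      have hb : ((distG t).dist x y : ℤ) ≤ ((q + 1).toNat : ℤ) + ((m - c).toNat : ℤ) := by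
        apply distG_dist_le h3 (q + 1).toNat (m - c).toNat (-2) (Or.inr rfl)
        rw [Int.toNat_of_nonneg (by omega), Int.toNat_of_nonneg (by omega)]
        nlinarith
      rw [Int.toNat_of_nonneg (by omega), Int.toNat_of_nonneg (by omega)] at hb
      omega

theorem stmt12 (t d : ℤ) (ht : Odd t) (h3 : 3 ≤ t) (hd : (t + 1) / 2 ≤ d) :
    (∀ a x y : ℤ, a ≤ x → x < a + (1 + t * (d - (t - 3) / 2)) →
      a ≤ y → y < a + (1 + t * (d - (t - 3) / 2)) →
      ((distG t).dist x y : ℤ) ≤ d) ∧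
    (∀ k : ℕ, (∃ f : ℤ → Fin k, ∀ u v : ℤ, u ≠ v → f u = f v →
        d < ((distG t).dist u v : ℤ)) →
      1 + t * (d - (t - 3) / 2) ≤ (k : ℤ)) := by
  have part1 : ∀ a x y : ℤ, a ≤ x → x < a + (1 + t * (d - (t - 3) / 2)) →
      a ≤ y → y < a + (1 + t * (d - (t - 3) / 2)) →
      ((distG t).dist x y : ℤ) ≤ d := by
    intro a x y h1 h2 h3' h4
    rcases le_total x y with hle | hle
    · exact distG_key t d ht h3 hd x y (by omega) (by omega)
    · rw [SimpleGraph.dist_comm]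
      exact distG_key t d ht h3 hd y x (by omega) (by omega)
  refine ⟨part1, ?_⟩
  intro k ⟨f, hf⟩
  set N : ℤ := 1 + t * (d - (t - 3) / 2) with hN
  have he2 : 2 ≤ d - (t - 3) / 2 := by
    obtain ⟨m, hm⟩ := ht
    omega
  have hNpos : 0 < N := by nlinarith
  have hinj : Function.Injective (fun i : Fin N.toNat => f (i : ℤ)) := by
    intro i j hij
    by_contra hne
    have hne' : (i : ℤ) ≠ (j : ℤ) := by
      simpa using fun h => hne (Fin.ext (by exact_mod_cast h))
    have := hf _ _ hne' hij
    have hi : (i : ℤ) < N := by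
      have := i.isLt
      omega
    have hj : (j : ℤ) < N := by
      have := j.isLt
      omega
    have := part1 0 (i : ℤ) (j : ℤ) (by positivity) (by omega) (by positivity) (by omega)
    omega
  have := Fintype.card_le_of_injective _ hinj
  simp [Fintype.card_fin] at this
  omega
end

section
/- If t ≥ 3 is odd and d ≥ (t+1)/2, then the d-distance chromatic number of G(ℤ,{2,t}) is at most td + (−t² + 2t + 7)/4. -/
/-!
Write t = 2r + 1 and colour x by x mod p, where p = t d - s with s = r² - 2 + δ and δ ∈ {0, 1}
depending on r mod 4, so that p ≤ t d + 2 - r² = m. A walk of length at most d from u to v has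
v - u = 2P + tU with |P| + |U| ≤ d, hence |v - u| ≤ t d < 2p, and a clash of colours forces
v - u = ±p. But p = 2P + tU with |P| + |U| ≤ d gives, for c = d - U, that t c - s = 2P is even with
|t c - s| ≤ 2c; this pins 2c to r - 1 or r, and δ is chosen to make t c - s odd in both cases.
-/

open SimpleGraph

lemma SimpleGraph.reachable_add_mul_of_forall_adj {G : SimpleGraph ℤ} {s : ℤ}
    (h : ∀ x, G.Adj x (x + s)) (x a : ℤ) : G.Reachable x (x + s * a) := by
  induction a using Int.induction_on with
  | zero => simp
  | succ a ih => exact ih.trans (by convert (h _).reachable using 1; ring)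
  | pred a ih => exact ih.trans (by convert (h (x + s * (-a - 1))).reachable.symm using 1; ring)

namespace distG

lemma adj_iff {t x y : ℤ} : (distG t).Adj x y ↔ x ≠ y ∧ (|y - x| = 2 ∨ |y - x| = t) := by
  simp only [distG, fromRel_adj, abs_sub_comm x y, or_self]

lemma adj_add_two (t x : ℤ) : (distG t).Adj x (x + 2) :=
  adj_iff.mpr ⟨by omega, Or.inl (by simp)⟩

lemma adj_add_self {t : ℤ} (ht : 0 < t) (x : ℤ) : (distG t).Adj x (x + t) :=
  adj_iff.mpr ⟨by omega, Or.inr (by simp [abs_of_pos ht])⟩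

lemma connected {t : ℤ} (ht : Odd t) (h0 : 0 < t) : (distG t).Connected := by
  obtain ⟨r, rfl⟩ := ht
  refine (connected_iff _).mpr ⟨fun u v => ?_, ⟨0⟩⟩
  have by_two := reachable_add_mul_of_forall_adj (adj_add_two (2 * r + 1)) u (-r * (v - u))
  have by_t := reachable_add_mul_of_forall_adj (adj_add_self h0) (u + 2 * (-r * (v - u))) (v - u)
  convert by_two.trans by_t using 1
  ring

end distG

def stepBall (t d : ℤ) : Set ℤ := {n | ∃ P U : ℤ, n = 2 * P + t * U ∧ |P| + |U| ≤ d}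

namespace stepBall

variable {t d n : ℤ}

lemma zero_mem : (0 : ℤ) ∈ stepBall t 0 := ⟨0, 0, by simp⟩

lemma add_mem {k l a b : ℤ} (ha : a ∈ stepBall t k) (hb : b ∈ stepBall t l) :
    a + b ∈ stepBall t (k + l) := by
  obtain ⟨P, U, rfl, h⟩ := ha
  obtain ⟨P', U', rfl, h'⟩ := hb
  refine ⟨P + P', U + U', by ring, ?_⟩
  linarith [abs_add_le P P', abs_add_le U U']

lemma mono {d' : ℤ} (h : d ≤ d') : stepBall t d ⊆ stepBall t d' :=
  fun _ ⟨P, U, hn, hPU⟩ => ⟨P, U, hn, hPU.trans h⟩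

lemma neg_mem (hn : n ∈ stepBall t d) : -n ∈ stepBall t d := by
  obtain ⟨P, U, rfl, h⟩ := hn
  exact ⟨-P, -U, by ring, by simpa using h⟩

lemma abs_le_mul (ht : 2 ≤ t) (hn : n ∈ stepBall t d) : |n| ≤ t * d := by
  obtain ⟨P, U, rfl, h⟩ := hn
  calc |2 * P + t * U| ≤ 2 * |P| + t * |U| := by
        simpa [abs_mul, abs_of_pos (by omega : 0 < t)] using abs_add_le (2 * P) (t * U)
    _ ≤ t * (|P| + |U|) := by nlinarith [abs_nonneg P]
    _ ≤ t * d := by gcongr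

lemma exists_even_of_mul_sub_mem {s : ℤ} (h : t * d - s ∈ stepBall t d) :
    ∃ c, |t * c - s| ≤ 2 * c ∧ Even (t * c - s) := by
  obtain ⟨P, U, hn, hPU⟩ := h
  refine ⟨d - U, ?_, ⟨P, by linear_combination hn⟩⟩
  have : t * (d - U) - s = 2 * P := by linear_combination hn
  rw [this, abs_mul, abs_two]
  linarith [le_abs_self U]

end stepBall

lemma distG.sub_mem_stepBall_of_adj {t x y : ℤ} (h : (distG t).Adj x y) :
    y - x ∈ stepBall t 1 := by
  rcases (distG.adj_iff.mp h).2 with h | h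
  · rcases abs_eq (by norm_num : (0 : ℤ) ≤ 2) |>.mp h with h | h
    · exact ⟨1, 0, by simp [h], by simp⟩
    · exact ⟨-1, 0, by simp [h], by simp⟩
  · rcases abs_eq (h ▸ abs_nonneg _) |>.mp h with h | h
    · exact ⟨0, 1, by simp [h], by simp⟩
    · exact ⟨0, -1, by simp [h], by simp⟩

lemma distG.sub_mem_stepBall_of_walk {t u v : ℤ} (w : (distG t).Walk u v) :
    v - u ∈ stepBall t w.length := by
  induction w with
  | nil => simpa using stepBall.zero_mem
  | @cons u b v h w ih =>
    simpa [add_comm] using stepBall.add_mem (sub_mem_stepBall_of_adj h) ih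

def shift (r : ℤ) : ℤ := r ^ 2 - 2 + if r % 4 = 1 ∨ r % 4 = 2 then 0 else 1

lemma sq_sub_two_le_shift (r : ℤ) : r ^ 2 - 2 ≤ shift r := by
  unfold shift; split_ifs <;> omega

lemma shift_le_sq_sub_one (r : ℤ) : shift r ≤ r ^ 2 - 1 := by
  unfold shift; split_ifs <;> omega

lemma odd_mul_sub_shift {r c : ℤ} (hr : 1 ≤ r) (hc : |(2 * r + 1) * c - shift r| ≤ 2 * c) :
    Odd ((2 * r + 1) * c - shift r) := by
  obtain ⟨hlo, hhi⟩ := abs_le.mp hc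
  have := sq_sub_two_le_shift r
  have := shift_le_sq_sub_one r
  have hc_le : 2 * c ≤ r := by nlinarith
  have le_hc : r ≤ 2 * c + 1 := by nlinarith
  -- after substituting r, the expression is linear in c and its parity depends on c mod 2 only
  obtain rfl | rfl : r = 2 * c ∨ r = 2 * c + 1 := by omega
  all_goals
    unfold shift
    split_ifs <;> rw [Int.odd_iff] <;> ring_nf <;> omega

lemma mul_sub_shift_not_mem_stepBall {r : ℤ} (hr : 1 ≤ r) (d : ℤ) :
    (2 * r + 1) * d - shift r ∉ stepBall (2 * r + 1) d := fun h =>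
  let ⟨_, hc, heven⟩ := stepBall.exists_even_of_mul_sub_mem h
  Int.not_even_iff_odd.mpr (odd_mul_sub_shift hr hc) heven

lemma eq_zero_of_mem_stepBall_of_dvd {r d n : ℤ} (hr : 1 ≤ r) (hd : r + 1 ≤ d)
    (hn : n ∈ stepBall (2 * r + 1) d) (hdvd : (2 * r + 1) * d - shift r ∣ n) : n = 0 := by
  set p := (2 * r + 1) * d - shift r
  have := shift_le_sq_sub_one r
  have hp : (2 * r + 1) * d < 2 * p := by nlinarith
  have hp0 : 0 < p := by nlinarith
  obtain ⟨k, rfl⟩ := hdvd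
  have hk : |k| < 2 := by
    have := stepBall.abs_le_mul (by omega) hn
    rw [abs_mul, abs_of_pos hp0] at this
    exact lt_of_mul_lt_mul_left (by linarith) hp0.le
  rcases abs_lt.mp hk with ⟨hk1, hk2⟩
  obtain rfl | rfl | rfl : k = -1 ∨ k = 0 ∨ k = 1 := by omega
  · exact absurd (by simpa using stepBall.neg_mem hn) (mul_sub_shift_not_mem_stepBall hr d)
  · simp
  · exact absurd (by simpa using hn) (mul_sub_shift_not_mem_stepBall hr d)

lemma exists_fin_forall_dvd_sub_of_eq {p : ℤ} {m : ℕ} (hp : 0 < p) (hpm : p ≤ m) :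
    ∃ f : ℤ → Fin m, ∀ u v, f u = f v → p ∣ v - u := by
  have hmod (x : ℤ) : 0 ≤ x % p ∧ x % p < p := ⟨Int.emod_nonneg x hp.ne', Int.emod_lt_of_pos x hp⟩
  refine ⟨fun x => ⟨(x % p).toNat, by have := hmod x; omega⟩, fun u v h => Int.ModEq.dvd ?_⟩
  simp only [Fin.mk.injEq] at h
  have := hmod u
  have := hmod v
  unfold Int.ModEq
  omega

theorem stmt15 (t : ℤ) (ht : Odd t) (h3 : 3 ≤ t) (d : ℕ) (hd : (t + 1) / 2 ≤ (d : ℤ))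
    (m : ℕ) (hm : (m : ℤ) = t * d + (-t ^ 2 + 2 * t + 7) / 4) :
    ∃ f : ℤ → Fin m, ∀ u v : ℤ, u ≠ v → f u = f v → d < (distG t).dist u v := by
  obtain ⟨r, rfl⟩ := ht
  have hr : 1 ≤ r := by omega
  replace hd : r + 1 ≤ (d : ℤ) := by omega
  replace hm : (m : ℤ) = (2 * r + 1) * d + 2 - r ^ 2 := by
    rw [hm, show -(2 * r + 1) ^ 2 + 2 * (2 * r + 1) + 7 = 4 * (2 - r ^ 2) by ring]
    omega
  set p := (2 * r + 1) * (d : ℤ) - shift r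
  have := sq_sub_two_le_shift r
  have := shift_le_sq_sub_one r
  have hp : 0 < p := by nlinarith
  obtain ⟨f, hf⟩ := exists_fin_forall_dvd_sub_of_eq hp (by omega : p ≤ m)
  refine ⟨f, fun u v huv hfuv => ?_⟩
  by_contra! hle
  obtain ⟨w, hw⟩ := (distG.connected ⟨r, rfl⟩ (by omega)).exists_walk_length_eq_dist u v
  have hmem : v - u ∈ stepBall (2 * r + 1) d :=
    stepBall.mono (by omega) (distG.sub_mem_stepBall_of_walk w)
  have := eq_zero_of_mem_stepBall_of_dvd hr hd hmem (hf u v hfuv)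
  omega
end
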